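/- There exist constants C > 0 and l₀ > 0 (depending only on n and V) such that for all cubes P ⊆ Q in ℝⁿ and all θ ≥ 0, (1 + r_P/ρ(x_P))^θ ≤ C^θ (1 + r_Q/ρ(x_Q))^{θ(1+l₀)}, i.e. Ψ_θ(P) ≲ Ψ_{θ(1+l₀)}(Q); more precisely, r_P/ρ(x_P) ≤ C (1 + r_Q/ρ(x_Q))^{1+l₀} whenever P ⊆ Q. -/

import Mathlib

/-!
Shen's argument. Hölder's inequality and `RH_q` give
`∫_{B(x,r)} V ≤ C (r/R)^{n(1-1/q)} ∫_{B(x,R)} V` for `r ≤ R`; applied to a thin annulus this makes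
`V dx` doubling, so beyond the critical radius `∫_{B(y,S)} V` grows at most like a power of
`S/ρ(y)`. Because `n(1-1/q) > n - 2`, the ball around `x` of radius
`c ρ(y) (1 + |x-y|/ρ(y))^{-β}` then satisfies `∫ V ≤ r^{n-2}`, whence
`ρ(x) ≥ c ρ(y) (1 + |x-y|/ρ(y))^{-β}`. For cubes `P ⊆ Q` we have `r_P ≤ r_Q` and
`|x_P - x_Q| ≤ n r_Q`, which turns this into the claim with `l₀ = β`.
-/

open MeasureTheory Metric Set ENNReal

noncomputable section

abbrev Euc (n : ℕ) := EuclideanSpace ℝ (Fin n)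

/-- An axis-parallel cube in `ℝⁿ`, given by its center and side length. -/
structure Cube (n : ℕ) where
  center : Euc n
  side : ℝ

namespace Cube

variable {n : ℕ}

/-- The underlying set of a cube. -/
def set (Q : Cube n) : Set (Euc n) := {y : Euc n | ∀ i, |y i - Q.center i| ≤ Q.side / 2}

/-- The Lebesgue measure `|Q|` of a cube, as a real number. -/
def vol (Q : Cube n) : ℝ := (volume Q.set).toReal

/-- The concentric dilate `αQ` of a cube. -/
def dilate (Q : Cube n) (α : ℝ) : Cube n := ⟨Q.center, α * Q.side⟩

end Cube

/-- The average `|Q|⁻¹ ∫_Q f` of `f` over the cube `Q`. -/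
def cubeAvg {n : ℕ} (Q : Cube n) (f : Euc n → ℝ) : ℝ :=
  Q.vol⁻¹ * ∫ y in Q.set, f y

/-- `Ψ_θ(Q) = (1 + r_Q/ρ(x_Q))^θ` for a cube `Q`. -/
def Psi {n : ℕ} (ρ : Euc n → ℝ) (θ : ℝ) (Q : Cube n) : ℝ :=
  (1 + Q.side / ρ Q.center) ^ θ

/-- The average `|B(x,r)|⁻¹ ∫_{B(x,r)} f` of `f` over a ball. -/
def ballAvg {n : ℕ} (x : Euc n) (r : ℝ) (f : Euc n → ℝ) : ℝ :=
  (volume (ball x r)).toReal⁻¹ * ∫ y in ball x r, f y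

/-- `Ψ_θ(B(x,r)) = (1 + r/ρ(x))^θ` for a ball. -/
def PsiB {n : ℕ} (ρ : Euc n → ℝ) (θ : ℝ) (x : Euc n) (r : ℝ) : ℝ :=
  (1 + r / ρ x) ^ θ

/-- The critical radius function
`ρ(x) = sup { r > 0 : r^{-(n-2)} ∫_{B(x,r)} V ≤ 1 }` of a Schrödinger potential `V`. -/
def critRho {n : ℕ} (V : Euc n → ℝ) (x : Euc n) : ℝ :=
  sSup {r : ℝ | 0 < r ∧ (∫ y in ball x r, V y) ≤ r ^ ((n : ℝ) - 2)}

/-- A nonnegative, nontrivial, locally `L^q` potential satisfying the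
reverse Hölder inequality `RH_q`. -/
structure IsSchrodingerPotential (n : ℕ) (q : ℝ) (V : Euc n → ℝ) : Prop where
  nonneg : ∀ x, 0 ≤ V x
  nontrivial : ¬ (∀ᵐ x ∂(volume : Measure (Euc n)), V x = 0)
  locLq : ∀ (x : Euc n) (r : ℝ), 0 < r → IntegrableOn (fun y => V y ^ q) (ball x r) volume
  revHolder : ∃ C : ℝ, 0 < C ∧ ∀ (x : Euc n) (r : ℝ), 0 < r →
    ((volume (ball x r)).toReal⁻¹ * ∫ y in ball x r, V y ^ q) ^ q⁻¹ ≤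
      C * ((volume (ball x r)).toReal⁻¹ * ∫ y in ball x r, V y)

/-- The `A_p^{ρ,θ}` quantity of a weight `ω` on a single cube `Q`. -/
def apQuantity {n : ℕ} (ρ : Euc n → ℝ) (p θ : ℝ) (ω : Euc n → ℝ) (Q : Cube n) : ℝ :=
  ((Psi ρ θ Q)⁻¹ * cubeAvg Q ω) *
    ((Psi ρ θ Q)⁻¹ * cubeAvg Q (fun y => ω y ^ (-(p - 1)⁻¹))) ^ (p - 1)

/-- `A` is an admissible `A_p^{ρ,θ}` constant for `ω`. -/
def apBound {n : ℕ} (ρ : Euc n → ℝ) (p θ : ℝ) (ω : Euc n → ℝ) (A : ℝ) : Prop :=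
  ∀ Q : Cube n, 0 < Q.side → apQuantity ρ p θ ω Q ≤ A

/-- Membership `ω ∈ A_p^{ρ,θ}`. -/
def MemAp {n : ℕ} (ρ : Euc n → ℝ) (p θ : ℝ) (ω : Euc n → ℝ) : Prop :=
  (∀ x, 0 ≤ ω x) ∧ LocallyIntegrable ω volume ∧ ∃ A : ℝ, apBound ρ p θ ω A

/-- The characteristic `[ω]_{A_p^{ρ,θ}}`, as the least admissible constant. -/
def apNorm {n : ℕ} (ρ : Euc n → ℝ) (p θ : ℝ) (ω : Euc n → ℝ) : ℝ :=
  sInf {A : ℝ | 0 ≤ A ∧ apBound ρ p θ ω A}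

/-- `A` is an admissible `BMO_θ(ρ)` constant for `b`. -/
def bmoBound {n : ℕ} (ρ : Euc n → ℝ) (θ : ℝ) (b : Euc n → ℝ) (A : ℝ) : Prop :=
  ∀ (x : Euc n) (r : ℝ), 0 < r →
    (PsiB ρ θ x r)⁻¹ * ballAvg x r (fun y => |b y - ballAvg x r b|) ≤ A

/-- Membership `b ∈ BMO_θ(ρ)`. -/
def MemBMO {n : ℕ} (ρ : Euc n → ℝ) (θ : ℝ) (b : Euc n → ℝ) : Prop :=
  LocallyIntegrable b volume ∧ ∃ A : ℝ, bmoBound ρ θ b A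

/-- The norm `‖b‖_{BMO_θ(ρ)}`. -/
def bmoNorm {n : ℕ} (ρ : Euc n → ℝ) (θ : ℝ) (b : Euc n → ℝ) : ℝ :=
  sInf {A : ℝ | 0 ≤ A ∧ bmoBound ρ θ b A}

/-- The weighted norm `‖f‖_{L^p(ω)}`, valued in `ℝ≥0∞`. -/
def wLp {n : ℕ} (p : ℝ) (ω : Euc n → ℝ) (f : Euc n → ℝ) : ℝ≥0∞ :=
  (∫⁻ x, ENNReal.ofReal (|f x| ^ p * ω x)) ^ (1 / p)

/-- The weighted norm `‖g‖_{L^p(ω)}` of an `ℝ≥0∞`-valued function. -/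
def wLpE {n : ℕ} (p : ℝ) (ω : Euc n → ℝ) (g : Euc n → ℝ≥0∞) : ℝ≥0∞ :=
  (∫⁻ x, g x ^ p * ENNReal.ofReal (ω x)) ^ (1 / p)

/-- `S` is an `η`-sparse family of cubes. -/
def IsSparseFamily {n : ℕ} (η : ℝ) (S : Set (Cube n)) : Prop :=
  S.Countable ∧ (∀ Q ∈ S, 0 < Q.side) ∧
    ∃ E : Cube n → Set (Euc n),
      (∀ Q ∈ S, E Q ⊆ Q.set ∧ MeasurableSet (E Q) ∧
        ENNReal.ofReal (η * Q.vol) ≤ volume (E Q)) ∧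
      S.PairwiseDisjoint E

/-- The sparse operator `𝒜_S^{r,p₀,ρ,N}`. -/
def sparseOp {n : ℕ} (ρ : Euc n → ℝ) (r p₀ N : ℝ) (S : Set (Cube n)) (f : Euc n → ℝ)
    (x : Euc n) : ℝ≥0∞ :=
  (∑' Q : S,
      ENNReal.ofReal ((cubeAvg Q.1 (fun y => |f y| ^ r)) ^ (p₀ / r) * (Psi ρ N Q.1)⁻¹ ^ p₀) *
        Q.1.set.indicator (fun _ => (1 : ℝ≥0∞)) x) ^ (1 / p₀)

/-- The commutator sparse operator `𝒯_{S,b}^{ρ,N}`. -/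
def sparseCommOp {n : ℕ} (ρ : Euc n → ℝ) (N : ℝ) (S : Set (Cube n)) (b f : Euc n → ℝ)
    (x : Euc n) : ℝ :=
  ∑' Q : S, |b x - cubeAvg Q.1 b| * cubeAvg Q.1 f * (Psi ρ N Q.1)⁻¹ *
    Q.1.set.indicator (fun _ => (1 : ℝ)) x

/-- The adjoint commutator sparse operator `𝒯_{S,b}^{ρ,N,⋆}`. -/
def sparseCommOpStar {n : ℕ} (ρ : Euc n → ℝ) (N : ℝ) (S : Set (Cube n)) (b f : Euc n → ℝ)
    (x : Euc n) : ℝ :=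
  ∑' Q : S, cubeAvg Q.1 (fun y => |b y - cubeAvg Q.1 b| * f y) * (Psi ρ N Q.1)⁻¹ *
    Q.1.set.indicator (fun _ => (1 : ℝ)) x

/-- The operator norm of `T` on `L^p(ω)`, valued in `ℝ≥0∞`. -/
def opNormW {n : ℕ} (p : ℝ) (ω : Euc n → ℝ) (T : (Euc n → ℝ) → Euc n → ℝ) : ℝ≥0∞ :=
  ⨆ f : {f : Euc n → ℝ // wLp p ω f ≠ 0 ∧ wLp p ω f ≠ ⊤}, wLp p ω (T f.1) / wLp p ω f.1

/-- The Luxemburg norm `‖g‖_{Φ,Q}` over a cube `Q`. -/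
def luxNorm {n : ℕ} (Φ : ℝ → ℝ) (Q : Cube n) (g : Euc n → ℝ) : ℝ :=
  sInf {lam : ℝ | 0 < lam ∧ cubeAvg Q (fun y => Φ (|g y| / lam)) ≤ 1}

/-- The Young function `Φ(t) = t log(e + t)`. -/
def PhiLlogL (t : ℝ) : ℝ := t * Real.log (Real.exp 1 + t)

/-- The Young function `Φ̄(t) = e^t - 1`. -/
def PhiExp (t : ℝ) : ℝ := Real.exp t - 1

/-- The weighted maximal function `M_ω h(x) = sup_{Q ∋ x} ω(Q)⁻¹ ∫_Q |h| ω`. -/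
def wMax {n : ℕ} (ω h : Euc n → ℝ) (x : Euc n) : ℝ :=
  ⨆ Q : {Q : Cube n // 0 < Q.side ∧ x ∈ Q.set},
    (∫ y in Q.1.set, ω y)⁻¹ * ∫ y in Q.1.set, |h y| * ω y

/-- The (unweighted) `L^q`-norm, valued in `ℝ≥0∞`. -/
def lpN {n : ℕ} (q : ℝ) (f : Euc n → ℝ) : ℝ≥0∞ :=
  (∫⁻ x, ENNReal.ofReal (|f x| ^ q)) ^ (1 / q)

/-- `T` is of weak type `(q,q)`. -/
def IsWeakType {n : ℕ} (T : (Euc n → ℝ) → Euc n → ℝ) (q : ℝ) : Prop :=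
  ∃ C : ℝ, 0 < C ∧ ∀ f : Euc n → ℝ, AEMeasurable f volume → lpN q f ≠ ⊤ →
    ∀ lam : ℝ, 0 < lam →
      volume {x | lam < |T f x|} ≤ (ENNReal.ofReal C * lpN q f / ENNReal.ofReal lam) ^ q

/-- The localized sharp grand maximal truncation operator `ℳ_{T,α}^{#}`. -/
def grandMax {n : ℕ} (T : (Euc n → ℝ) → Euc n → ℝ) (α : ℝ) (f : Euc n → ℝ) (x : Euc n) :
    ℝ≥0∞ :=
  ⨆ Q : {Q : Cube n // 0 < Q.side ∧ x ∈ Q.set},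
    essSup
      (fun z : Euc n × Euc n =>
        ENNReal.ofReal
          |T (Set.indicator ((Q.1.dilate α).set)ᶜ f) z.1 -
            T (Set.indicator ((Q.1.dilate α).set)ᶜ f) z.2|)
      ((volume.restrict Q.1.set).prod (volume.restrict Q.1.set))

/-- An `ℝ≥0∞`-valued operator is of weak type `(r,r)`. -/
def IsWeakTypeE {n : ℕ} (M : (Euc n → ℝ) → Euc n → ℝ≥0∞) (r : ℝ) : Prop :=
  ∃ C : ℝ, 0 < C ∧ ∀ f : Euc n → ℝ, AEMeasurable f volume → lpN r f ≠ ⊤ →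
    ∀ lam : ℝ, 0 < lam →
      volume {x | ENNReal.ofReal lam < M f x} ≤
        (ENNReal.ofReal C * lpN r f / ENNReal.ofReal lam) ^ r

/-- The maximal function `ℳ_{r,ρ,θ}` (over balls), valued in `ℝ≥0∞`. -/
def maxFnB {n : ℕ} (ρ : Euc n → ℝ) (r θ : ℝ) (f : Euc n → ℝ) (x : Euc n) : ℝ≥0∞ :=
  ⨆ c : Euc n, ⨆ s : ℝ, ⨆ _ : 0 < s ∧ x ∈ ball c s,
    ENNReal.ofReal ((PsiB ρ θ c s)⁻¹ * (ballAvg c s (fun y => |f y| ^ r)) ^ r⁻¹)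

/-- The maximal function `ℳ_{ρ,θ}` (over cubes). -/
def maxC {n : ℕ} (ρ : Euc n → ℝ) (θ : ℝ) (f : Euc n → ℝ) (x : Euc n) : ℝ :=
  ⨆ Q : {Q : Cube n // 0 < Q.side ∧ x ∈ Q.set},
    (Psi ρ θ Q.1)⁻¹ * cubeAvg Q.1 (fun y => |f y|)

/-- The maximal function `ℳ_{L log L, ρ, θ}` (over cubes). -/
def maxLlogL {n : ℕ} (ρ : Euc n → ℝ) (θ : ℝ) (f : Euc n → ℝ) (x : Euc n) : ℝ :=
  ⨆ Q : {Q : Cube n // 0 < Q.side ∧ x ∈ Q.set},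
    (Psi ρ θ Q.1)⁻¹ * luxNorm PhiLlogL Q.1 f

/-- The reverse Hölder exponent `r_ω = 1 + 1/(2^{2p(1+θ)+n+1}·A)`. -/
def rExp (n : ℕ) (p θ A : ℝ) : ℝ := 1 + ((2 : ℝ) ^ (2 * p * (1 + θ) + (n : ℝ) + 1) * A)⁻¹

open Filter Topology

section

variable {α : Type*} [MeasurableSpace α] {μ : Measure α} {f : α → ℝ} {q : ℝ}

lemma memLp_of_integrable_rpow (hf : ∀ x, 0 ≤ f x) (hq : 0 < q)
    (hfq : Integrable (fun x => f x ^ q) μ) : MemLp f (ENNReal.ofReal q) μ := by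
  have hroot : f = fun x => (f x ^ q) ^ q⁻¹ := by
    funext x
    rw [← Real.rpow_mul (hf x), mul_inv_cancel₀ hq.ne', Real.rpow_one]
  have hmeas : AEStronglyMeasurable f μ := by
    rw [hroot]
    exact (Real.continuous_rpow_const (inv_nonneg.2 hq.le)).comp_aestronglyMeasurable
      hfq.aestronglyMeasurable
  refine (integrable_norm_rpow_iff hmeas (by simpa using hq) ENNReal.ofReal_ne_top).1 ?_
  simpa only [Real.norm_of_nonneg (hf _), ENNReal.toReal_ofReal hq.le] using hfq

lemma setIntegral_le_integral_rpow_mul_measure (hq : 1 < q) (hf : ∀ x, 0 ≤ f x) {s : Set α}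
    (hs : μ s < ∞) (hfq : IntegrableOn (fun x => f x ^ q) s μ) :
    ∫ x in s, f x ∂μ ≤ (∫ x in s, f x ^ q ∂μ) ^ q⁻¹ * (μ s).toReal ^ (1 - q⁻¹) := by
  have : IsFiniteMeasure (μ.restrict s) := ⟨by rwa [Measure.restrict_apply_univ]⟩
  have hpq : q.HolderConjugate (q / (q - 1)) := Real.HolderConjugate.conjExponent hq
  have h := integral_mul_le_Lp_mul_Lq_of_nonneg hpq (.of_forall hf) (.of_forall fun _ => zero_le_one)
    (memLp_of_integrable_rpow hf (by linarith) hfq) (memLp_const 1)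
  have hexp : 1 / (q / (q - 1)) = 1 - q⁻¹ := by field_simp
  simpa [hexp, Measure.real] using h

lemma le_two_mul_rpow_logb_mul_of_doubling {g : ℝ → ℝ} {lam ρ S : ℝ} (hlam : 1 < lam)
    (hmono : MonotoneOn g (Ioi 0)) (hdbl : ∀ t, 0 < t → g (lam * t) ≤ 2 * g t)
    (hρ : 0 < ρ) (hg : 0 ≤ g ρ) (hS : ρ ≤ S) :
    g S ≤ 2 * (S / ρ) ^ Real.logb lam 2 * g ρ := by
  have hlam0 : 0 < lam := by linarith
  have hiter : ∀ k : ℕ, g (lam ^ k * ρ) ≤ 2 ^ k * g ρ := by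
    intro k
    induction k with
    | zero => simp
    | succ k ih =>
      calc g (lam ^ (k + 1) * ρ) = g (lam * (lam ^ k * ρ)) := by ring_nf
        _ ≤ 2 * g (lam ^ k * ρ) := hdbl _ (by positivity)
        _ ≤ 2 * (2 ^ k * g ρ) := by gcongr
        _ = 2 ^ (k + 1) * g ρ := by ring
  have hS0 : 0 < S := hρ.trans_le hS
  set a := Real.logb lam (S / ρ)
  set k := ⌈a⌉₊
  have ha : 0 ≤ a := Real.logb_nonneg hlam ((one_le_div hρ).2 hS)
  have hSa : S = lam ^ a * ρ := by
    rw [Real.rpow_logb hlam0 hlam.ne' (by positivity)]; field_simp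
  have hlamk : lam ^ (k : ℝ) ≤ lam ^ (a + 1) :=
    Real.rpow_le_rpow_of_exponent_le hlam.le (Nat.ceil_lt_add_one ha).le
  have hSk : S ≤ lam ^ k * ρ := by
    rw [hSa, ← Real.rpow_natCast]
    gcongr
    exacts [hlam.le, Nat.le_ceil a]
  have h2k : (2 : ℝ) ^ k ≤ 2 * (S / ρ) ^ Real.logb lam 2 := by
    calc (2 : ℝ) ^ k = (lam ^ (k : ℝ)) ^ Real.logb lam 2 := by
          rw [← Real.rpow_mul hlam0.le, mul_comm, Real.rpow_mul hlam0.le,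
            Real.rpow_logb hlam0 hlam.ne' two_pos, Real.rpow_natCast]
      _ ≤ (lam ^ (a + 1)) ^ Real.logb lam 2 :=
          Real.rpow_le_rpow (by positivity) hlamk (Real.logb_nonneg hlam one_le_two)
      _ = 2 * (S / ρ) ^ Real.logb lam 2 := by
          rw [Real.rpow_add hlam0, Real.rpow_one, Real.rpow_logb hlam0 hlam.ne' (by positivity),
            Real.mul_rpow (by positivity) hlam0.le, Real.rpow_logb hlam0 hlam.ne' two_pos,
            mul_comm]
  calc g S ≤ g (lam ^ k * ρ) := hmono (mem_Ioi.2 hS0) (mem_Ioi.2 (by positivity)) hSk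
    _ ≤ 2 ^ k * g ρ := hiter k
    _ ≤ 2 * (S / ρ) ^ Real.logb lam 2 * g ρ := by gcongr

end

lemma volume_ball_toReal_div {n : ℕ} (hn : 0 < n) (x y : Euc n) {r R : ℝ} (hr : 0 ≤ r)
    (hR : 0 < R) : (volume (ball x r)).toReal / (volume (ball y R)).toReal = (r / R) ^ n := by
  have : Nontrivial (Euc n) := by
    have : Nonempty (Fin n) := ⟨⟨0, hn⟩⟩
    infer_instance
  have hunit : 0 < (volume (ball (0 : Euc n) 1)).toReal :=
    ENNReal.toReal_pos (measure_ball_pos volume 0 one_pos).ne' measure_ball_lt_top.ne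
  rw [Measure.addHaar_ball _ _ hr, Measure.addHaar_ball _ _ hR.le, ENNReal.toReal_mul,
    ENNReal.toReal_mul, ENNReal.toReal_ofReal (by positivity), ENNReal.toReal_ofReal (by positivity),
    finrank_euclideanSpace_fin, div_pow]
  field_simp

-- `critRho V x = sSup (critSet V x)` unfolds by `rfl`; it is the junk value `0` unless
-- `critSet V x` is nonempty and bounded above.
def critSet {n : ℕ} (V : Euc n → ℝ) (x : Euc n) : Set ℝ :=
  {r : ℝ | 0 < r ∧ (∫ y in ball x r, V y) ≤ r ^ ((n : ℝ) - 2)}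

lemma two_sub_div_pos {n : ℕ} {q : ℝ} (hq : 1 < q) (hnq : (n : ℝ) < 2 * q) : 0 < 2 - n / q := by
  rw [sub_pos, div_lt_iff₀ (by linarith)]
  exact hnq

structure IsRHPotential (n : ℕ) (q C : ℝ) (V : Euc n → ℝ) : Prop where
  nonneg : ∀ x, 0 ≤ V x
  locLq : ∀ (x : Euc n) (r : ℝ), 0 < r → IntegrableOn (fun y => V y ^ q) (ball x r) volume
  revHolder : ∀ (x : Euc n) (r : ℝ), 0 < r →
    ((volume (ball x r)).toReal⁻¹ * ∫ y in ball x r, V y ^ q) ^ q⁻¹ ≤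
      C * ((volume (ball x r)).toReal⁻¹ * ∫ y in ball x r, V y)

lemma IsSchrodingerPotential.exists_isRHPotential {n : ℕ} {q : ℝ} {V : Euc n → ℝ}
    (hV : IsSchrodingerPotential n q V) : ∃ C, 1 ≤ C ∧ IsRHPotential n q C V := by
  obtain ⟨C, -, hRH⟩ := hV.revHolder
  refine ⟨max C 1, le_max_right _ _, hV.nonneg, hV.locLq, fun x r hr => (hRH x r hr).trans ?_⟩
  have : 0 ≤ ∫ y in ball x r, V y := setIntegral_nonneg measurableSet_ball fun y _ => hV.nonneg y
  gcongr
  exact le_max_left _ _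

namespace IsRHPotential

variable {n : ℕ} {q C : ℝ} {V : Euc n → ℝ}

lemma integrableOn_ball (hV : IsRHPotential n q C V) (hq : 1 ≤ q) (x : Euc n) (R : ℝ) :
    IntegrableOn V (ball x R) volume := by
  rcases le_or_gt R 0 with hR | hR
  · simp [ball_eq_empty.2 hR]
  have : IsFiniteMeasure (volume.restrict (ball x R)) :=
    ⟨by rw [Measure.restrict_apply_univ]; exact measure_ball_lt_top⟩
  exact (memLp_of_integrable_rpow hV.nonneg (by linarith) (hV.locLq x R hR)).integrable
    (by simpa using hq)

lemma setIntegral_le_of_subset_ball (hV : IsRHPotential n q C V) (hq : 1 ≤ q) {s : Set (Euc n)}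
    {x : Euc n} {R : ℝ} (hs : s ⊆ ball x R) : ∫ y in s, V y ≤ ∫ y in ball x R, V y :=
  setIntegral_mono_set (hV.integrableOn_ball hq x R) (.of_forall hV.nonneg) hs.eventuallyLE

lemma setIntegral_le_volume_ratio_rpow_mul (hV : IsRHPotential n q C V) (hq : 1 < q)
    {x : Euc n} {R : ℝ} (hR : 0 < R) {E : Set (Euc n)} (hE : E ⊆ ball x R) :
    ∫ y in E, V y ≤
      C * ((volume E).toReal / (volume (ball x R)).toReal) ^ (1 - q⁻¹) * ∫ y in ball x R, V y := by
  set vB := (volume (ball x R)).toReal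
  have hvB : 0 < vB :=
    ENNReal.toReal_pos (measure_ball_pos volume x hR).ne' measure_ball_lt_top.ne
  have hIq : 0 ≤ ∫ y in ball x R, V y ^ q :=
    setIntegral_nonneg measurableSet_ball fun y _ => Real.rpow_nonneg (hV.nonneg y) q
  have hHolder := setIntegral_le_integral_rpow_mul_measure hq hV.nonneg
    ((measure_mono hE).trans_lt measure_ball_lt_top) ((hV.locLq x R hR).mono_set hE)
  have hmono : (∫ y in E, V y ^ q) ≤ ∫ y in ball x R, V y ^ q :=
    setIntegral_mono_set (hV.locLq x R hR) (.of_forall fun y => Real.rpow_nonneg (hV.nonneg y) q)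
      hE.eventuallyLE
  have hRH : (∫ y in ball x R, V y ^ q) ^ q⁻¹ ≤ C * vB ^ (q⁻¹ - 1) * ∫ y in ball x R, V y := by
    have h : (vB⁻¹ * ∫ y in ball x R, V y ^ q) ^ q⁻¹ ≤ C * (vB⁻¹ * ∫ y in ball x R, V y) :=
      hV.revHolder x R hR
    rw [Real.mul_rpow (by positivity) hIq, Real.inv_rpow hvB.le, inv_mul_le_iff₀ (by positivity)]
      at h
    refine h.trans_eq ?_
    rw [Real.rpow_sub hvB, Real.rpow_one]
    field_simp
  calc ∫ y in E, V y ≤ (∫ y in E, V y ^ q) ^ q⁻¹ * (volume E).toReal ^ (1 - q⁻¹) := hHolder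
    _ ≤ (C * vB ^ (q⁻¹ - 1) * ∫ y in ball x R, V y) * (volume E).toReal ^ (1 - q⁻¹) := by
        gcongr
        exact (Real.rpow_le_rpow (setIntegral_nonneg_of_ae (.of_forall fun y =>
          Real.rpow_nonneg (hV.nonneg y) q)) hmono (by positivity)).trans hRH
    _ = C * ((volume E).toReal / vB) ^ (1 - q⁻¹) * ∫ y in ball x R, V y := by
        rw [Real.div_rpow ENNReal.toReal_nonneg hvB.le, show q⁻¹ - 1 = -(1 - q⁻¹) by ring,
          Real.rpow_neg hvB.le]
        ring

lemma setIntegral_ball_le_rpow_mul (hV : IsRHPotential n q C V) (hn : 0 < n) (hq : 1 < q)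
    (x : Euc n) {r R : ℝ} (hr : 0 < r) (hrR : r ≤ R) :
    ∫ y in ball x r, V y ≤ C * (r / R) ^ ((n : ℝ) * (1 - q⁻¹)) * ∫ y in ball x R, V y := by
  have hR : 0 < R := hr.trans_le hrR
  have h := hV.setIntegral_le_volume_ratio_rpow_mul hq hR (ball_subset_ball hrR (x := x))
  rwa [volume_ball_toReal_div hn x x hr.le hR, ← Real.rpow_natCast,
    ← Real.rpow_mul (by positivity)] at h

lemma exists_doubling (hV : IsRHPotential n q C V) (hn : 0 < n) (hq : 1 < q) :
    ∃ lam, 1 < lam ∧ ∀ (x : Euc n) (s : ℝ), 0 < s →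
      ∫ y in ball x (lam * s), V y ≤ 2 * ∫ y in ball x s, V y := by
  have hτ : 0 < 1 - q⁻¹ := sub_pos.2 (inv_lt_one_of_one_lt₀ hq)
  -- `1 - λ⁻ⁿ` is the relative volume of the annulus `B(x, λs) \ B(x, s)`: for `λ` close to `1`
  -- the annulus carries at most half of `∫_{B(x, λs)} V`.
  have hcont : ContinuousAt (fun l : ℝ => C * (1 - (l ^ n)⁻¹) ^ (1 - q⁻¹)) 1 := by
    fun_prop (disch := first | exact Or.inr hτ.le | simp)
  have hlim : Tendsto (fun l : ℝ => C * (1 - (l ^ n)⁻¹) ^ (1 - q⁻¹)) (𝓝[>] 1) (𝓝 0) := by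
    simpa [Real.zero_rpow hτ.ne'] using hcont.tendsto.mono_left nhdsWithin_le_nhds
  obtain ⟨lam, hsmall, hlam⟩ :=
    ((hlim.eventually (gt_mem_nhds (by norm_num : (0 : ℝ) < 1 / 2))).and
      self_mem_nhdsWithin).exists
  refine ⟨lam, hlam, fun x s hs => ?_⟩
  have hls : 0 < lam * s := mul_pos (zero_lt_one.trans hlam) hs
  have hsub : ball x s ⊆ ball x (lam * s) := ball_subset_ball (le_mul_of_one_le_left hs.le hlam.le)
  have hratio : (volume (ball x (lam * s) \ ball x s)).toReal / (volume (ball x (lam * s))).toReal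
      = 1 - (lam ^ n)⁻¹ := by
    rw [measure_sdiff hsub measurableSet_ball.nullMeasurableSet measure_ball_lt_top.ne,
      ENNReal.toReal_sub_of_le (measure_mono hsub) measure_ball_lt_top.ne, sub_div,
      div_self (ENNReal.toReal_pos (measure_ball_pos volume x hls).ne' measure_ball_lt_top.ne).ne',
      volume_ball_toReal_div hn x x hs.le hls, div_mul_cancel_right₀ hs.ne', inv_pow]
  have hannulus := hV.setIntegral_le_volume_ratio_rpow_mul hq hls
    (sdiff_subset : ball x (lam * s) \ ball x s ⊆ _)
  rw [hratio, setIntegral_sdiff measurableSet_ball (hV.integrableOn_ball hq.le x _) hsub] at hannulus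
  have : 0 ≤ ∫ y in ball x (lam * s), V y :=
    setIntegral_nonneg measurableSet_ball fun y _ => hV.nonneg y
  nlinarith

lemma exists_setIntegral_ball_pos (hV : IsRHPotential n q C V) (hq : 1 ≤ q)
    (hnt : ¬ ∀ᵐ x, V x = 0) : ∃ (x : Euc n) (r : ℝ), 0 < r ∧ 0 < ∫ y in ball x r, V y := by
  by_contra! h
  refine hnt ?_
  rw [← Measure.restrict_univ (μ := volume), ← iUnion_ball_nat_succ (0 : Euc n),
    ae_restrict_iUnion_iff]
  intro k
  have hzero : ∫ y in ball (0 : Euc n) (k + 1), V y = 0 :=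
    le_antisymm (h 0 _ k.cast_add_one_pos)
      (setIntegral_nonneg measurableSet_ball fun y _ => hV.nonneg y)
  exact (integral_eq_zero_iff_of_nonneg hV.nonneg (hV.integrableOn_ball hq 0 _)).1 hzero

lemma const_nonneg (hV : IsRHPotential n q C V) (hq : 1 ≤ q) (hnt : ¬ ∀ᵐ x, V x = 0) :
    0 ≤ C := by
  obtain ⟨x, r, hr, hpos⟩ := hV.exists_setIntegral_ball_pos hq hnt
  have hvol : 0 < (volume (ball x r)).toReal :=
    ENNReal.toReal_pos (measure_ball_pos volume x hr).ne' measure_ball_lt_top.ne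
  have hIq : 0 ≤ ∫ y in ball x r, V y ^ q :=
    setIntegral_nonneg measurableSet_ball fun y _ => Real.rpow_nonneg (hV.nonneg y) q
  refine nonneg_of_mul_nonneg_left ((Real.rpow_nonneg ?_ _).trans (hV.revHolder x r hr))
    (by positivity)
  positivity

lemma critSet_nonempty (hV : IsRHPotential n q C V) (hn : 0 < n) (hq : 1 < q)
    (hnq : (n : ℝ) < 2 * q) (x : Euc n) : (critSet V x).Nonempty := by
  have hδ := two_sub_div_pos hq hnq
  set F := ∫ y in ball x 1, V y
  have hlim : Tendsto (fun r : ℝ => C * r ^ (2 - n / q) * F) (𝓝[>] 0) (𝓝 0) := by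
    have : ContinuousAt (fun r : ℝ => C * r ^ (2 - n / q) * F) 0 := by
      fun_prop (disch := exact Or.inr hδ.le)
    simpa [Real.zero_rpow hδ.ne'] using this.tendsto.mono_left nhdsWithin_le_nhds
  obtain ⟨r, hsmall, hr0, hr1⟩ :=
    ((hlim.eventually (gt_mem_nhds one_pos)).and (Ioo_mem_nhdsGT one_pos)).exists
  refine ⟨r, hr0, ?_⟩
  calc ∫ y in ball x r, V y ≤ C * (r / 1) ^ ((n : ℝ) * (1 - q⁻¹)) * F :=
        hV.setIntegral_ball_le_rpow_mul hn hq x hr0 hr1.le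
    _ = r ^ ((n : ℝ) - 2) * (C * r ^ (2 - n / q) * F) := by
        rw [div_one, show (n : ℝ) * (1 - q⁻¹) = (n - 2) + (2 - n / q) by ring, Real.rpow_add hr0]
        ring
    _ ≤ r ^ ((n : ℝ) - 2) := mul_le_of_le_one_right (by positivity) hsmall.le

lemma bddAbove_critSet (hV : IsRHPotential n q C V) (hn : 0 < n) (hq : 1 < q)
    (hnq : (n : ℝ) < 2 * q) (hnt : ¬ ∀ᵐ x, V x = 0) (x : Euc n) : BddAbove (critSet V x) := by
  obtain ⟨x₀, r₀, hr₀, hpos⟩ := hV.exists_setIntegral_ball_pos hq.le hnt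
  have hδ := two_sub_div_pos hq hnq
  have hC := hV.const_nonneg hq.le hnt
  set α : ℝ := n * (1 - q⁻¹) with hα
  set T := dist x x₀ + r₀
  have hT : 0 < T := by positivity
  refine ⟨max T ((C * T ^ α / ∫ y in ball x₀ r₀, V y) ^ (2 - n / q)⁻¹), fun r ⟨hr0, hr⟩ => ?_⟩
  rcases le_or_gt r T with hrT | hTr
  · exact le_max_of_le_left hrT
  refine le_max_of_le_right ((Real.le_rpow_inv_iff_of_pos hr0.le (by positivity) hδ).2 ?_)
  rw [le_div_iff₀ hpos]
  have hrα : r ^ α = r ^ ((n : ℝ) - 2) * r ^ (2 - n / q) := by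
    rw [hα, ← Real.rpow_add hr0]; ring_nf
  calc r ^ (2 - n / q) * ∫ y in ball x₀ r₀, V y
      ≤ r ^ (2 - n / q) * ∫ y in ball x T, V y := by
        refine mul_le_mul_of_nonneg_left (hV.setIntegral_le_of_subset_ball hq.le
          (ball_subset_ball' ?_)) (by positivity)
        rw [dist_comm]; linarith
    _ ≤ r ^ (2 - n / q) * (C * (T / r) ^ α * ∫ y in ball x r, V y) := by
        gcongr
        exact hV.setIntegral_ball_le_rpow_mul hn hq x hT hTr.le
    _ ≤ r ^ (2 - n / q) * (C * (T / r) ^ α * r ^ ((n : ℝ) - 2)) := by gcongr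
    _ = C * T ^ α := by
        rw [Real.div_rpow hT.le hr0.le, hrα]
        field_simp

lemma le_critRho (hV : IsRHPotential n q C V) (hn : 0 < n) (hq : 1 < q)
    (hnq : (n : ℝ) < 2 * q) (hnt : ¬ ∀ᵐ x, V x = 0) {x : Euc n} {r : ℝ}
    (hr : r ∈ critSet V x) : r ≤ critRho V x :=
  le_csSup (hV.bddAbove_critSet hn hq hnq hnt x) hr

lemma critRho_pos (hV : IsRHPotential n q C V) (hn : 0 < n) (hq : 1 < q)
    (hnq : (n : ℝ) < 2 * q) (hnt : ¬ ∀ᵐ x, V x = 0) (x : Euc n) : 0 < critRho V x := by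
  obtain ⟨r, hr⟩ := hV.critSet_nonempty hn hq hnq x
  exact hr.1.trans_le (hV.le_critRho hn hq hnq hnt hr)

lemma setIntegral_ball_critRho_le (hV : IsRHPotential n q C V) (hn : 2 ≤ n) (hq : 1 < q)
    (hnq : (n : ℝ) < 2 * q) (hnt : ¬ ∀ᵐ x, V x = 0) {lam : ℝ} (hlam : 1 < lam)
    (hdbl : ∀ (x : Euc n) (s : ℝ), 0 < s →
      ∫ y in ball x (lam * s), V y ≤ 2 * ∫ y in ball x s, V y) (x : Euc n) :
    ∫ y in ball x (critRho V x), V y ≤ 2 * critRho V x ^ ((n : ℝ) - 2) := by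
  have hn0 : 0 < n := by omega
  have hρ := hV.critRho_pos hn0 hq hnq hnt x
  obtain ⟨r, hr, hlt⟩ :=
    exists_lt_of_lt_csSup (hV.critSet_nonempty hn0 hq hnq x) (div_lt_self hρ hlam)
  have hn2 : (0 : ℝ) ≤ n - 2 := by
    rw [sub_nonneg]; exact_mod_cast hn
  calc ∫ y in ball x (critRho V x), V y ≤ ∫ y in ball x (lam * r), V y :=
        hV.setIntegral_le_of_subset_ball hq.le
          (ball_subset_ball ((div_lt_iff₀' (zero_lt_one.trans hlam)).1 hlt).le)
    _ ≤ 2 * ∫ y in ball x r, V y := hdbl x r hr.1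
    _ ≤ 2 * r ^ ((n : ℝ) - 2) := by gcongr; exact hr.2
    _ ≤ 2 * critRho V x ^ ((n : ℝ) - 2) := by
        gcongr
        exacts [hr.1.le, hV.le_critRho hn0 hq hnq hnt hr]

lemma setIntegral_ball_le_of_critRho_le (hV : IsRHPotential n q C V) (hn : 2 ≤ n) (hq : 1 < q)
    (hnq : (n : ℝ) < 2 * q) (hnt : ¬ ∀ᵐ x, V x = 0) {lam : ℝ} (hlam : 1 < lam)
    (hdbl : ∀ (x : Euc n) (s : ℝ), 0 < s →
      ∫ y in ball x (lam * s), V y ≤ 2 * ∫ y in ball x s, V y) (x : Euc n) {S : ℝ}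
    (hS : critRho V x ≤ S) :
    ∫ y in ball x S, V y ≤
      4 * (S / critRho V x) ^ Real.logb lam 2 * critRho V x ^ ((n : ℝ) - 2) := by
  have hρ := hV.critRho_pos (by omega) hq hnq hnt x
  have hS0 : 0 < S := hρ.trans_le hS
  calc ∫ y in ball x S, V y
      ≤ 2 * (S / critRho V x) ^ Real.logb lam 2 * ∫ y in ball x (critRho V x), V y :=
        le_two_mul_rpow_logb_mul_of_doubling (g := fun t => ∫ y in ball x t, V y) hlam
          (fun s _ t _ hst => hV.setIntegral_le_of_subset_ball hq.le (ball_subset_ball hst))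
          (hdbl x) hρ (setIntegral_nonneg measurableSet_ball fun y _ => hV.nonneg y) hS
    _ ≤ 2 * (S / critRho V x) ^ Real.logb lam 2 * (2 * critRho V x ^ ((n : ℝ) - 2)) := by
        gcongr
        exact hV.setIntegral_ball_critRho_le hn hq hnq hnt hlam hdbl x
    _ = 4 * (S / critRho V x) ^ Real.logb lam 2 * critRho V x ^ ((n : ℝ) - 2) := by ring

lemma mem_critSet_of_growth (hV : IsRHPotential n q C V) (hC : 1 ≤ C) (hn : 0 < n)
    (hq : 1 < q) (hnq : (n : ℝ) < 2 * q) {y : Euc n} {ρ K m : ℝ} (hρ : 0 < ρ) (hK : 1 ≤ K)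
    (hm : 0 ≤ m)
    (hgrowth : ∀ S, ρ ≤ S → ∫ z in ball y S, V z ≤ K * (S / ρ) ^ m * ρ ^ ((n : ℝ) - 2))
    (x : Euc n) :
    (K * 2 ^ m * C) ^ (-(2 - n / q)⁻¹) * ρ * (1 + dist x y / ρ) ^ (-(m / (2 - n / q)))
      ∈ critSet V x := by
  set δ := 2 - n / q with hδdef
  have hδ : 0 < δ := two_sub_div_pos hq hnq
  set α : ℝ := n * (1 - q⁻¹) with hα
  have hα0 : 0 ≤ α := mul_nonneg n.cast_nonneg (sub_nonneg.2 (inv_le_one_of_one_le₀ hq.le))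
  set A := K * 2 ^ m * C
  have hA : 1 ≤ A := one_le_mul_of_one_le_of_one_le
    (one_le_mul_of_one_le_of_one_le hK (Real.one_le_rpow one_le_two hm)) hC
  set c := A ^ (-δ⁻¹)
  have hc0 : 0 < c := by positivity
  have hc1 : c ≤ 1 := Real.rpow_le_one_of_one_le_of_nonpos hA (neg_nonpos.2 (inv_nonneg.2 hδ.le))
  have hcδ : c ^ δ = A⁻¹ := by
    rw [← Real.rpow_mul (by positivity), neg_mul, inv_mul_cancel₀ hδ.ne', Real.rpow_neg_one]
  -- `c ^ δ = (K 2^m C)⁻¹` and `β δ = m` (with `β = m / δ`) make everything but `b ^ (-α)` cancel.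
  set d := dist x y
  set b := 1 + d / ρ with hbdef
  have hb : 1 ≤ b := le_add_of_nonneg_right (by positivity)
  have hb0 : 0 < b := zero_lt_one.trans_le hb
  have hρb : ρ * b = ρ + d := by rw [hbdef]; field_simp
  set t := c * ρ * b ^ (-(m / δ)) with htdef
  have ht : 0 < t := by positivity
  have htρb : t ≤ ρ * b :=
    calc t ≤ 1 * ρ * 1 := by
          rw [htdef]
          gcongr
          exact Real.rpow_le_one_of_one_le_of_nonpos hb (neg_nonpos.2 (by positivity))
      _ ≤ ρ * b := by nlinarith
  refine ⟨ht, ?_⟩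
  have ht_split : t ^ α = t ^ ((n : ℝ) - 2) * (c ^ δ * ρ ^ δ * (b ^ m)⁻¹) := by
    have htδ : t ^ δ = c ^ δ * ρ ^ δ * (b ^ m)⁻¹ := by
      rw [htdef, Real.mul_rpow (by positivity) (by positivity), Real.mul_rpow hc0.le hρ.le,
        ← Real.rpow_mul hb0.le, neg_mul, div_mul_cancel₀ _ hδ.ne', Real.rpow_neg hb0.le]
    rw [← htδ, ← Real.rpow_add ht, hα, hδdef]
    ring_nf
  have hρ_split : ρ ^ α = ρ ^ ((n : ℝ) - 2) * ρ ^ δ := by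
    rw [← Real.rpow_add hρ, hα, hδdef]; ring_nf
  calc ∫ z in ball x t, V z ≤ C * (t / (ρ * b)) ^ α * ∫ z in ball x (ρ * b), V z :=
        hV.setIntegral_ball_le_rpow_mul hn hq x ht htρb
    _ ≤ C * (t / (ρ * b)) ^ α * (K * (2 * b) ^ m * ρ ^ ((n : ℝ) - 2)) := by
        have hsub : ball x (ρ * b) ⊆ ball y (2 * ρ * b) := ball_subset_ball' (by linarith)
        have hgrow := hgrowth (2 * ρ * b) (by nlinarith)
        rw [show 2 * ρ * b / ρ = 2 * b by field_simp] at hgrow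
        gcongr
        exact (hV.setIntegral_le_of_subset_ball hq.le hsub).trans hgrow
    _ = t ^ ((n : ℝ) - 2) * (b ^ α)⁻¹ := by
        rw [Real.div_rpow ht.le (by positivity), Real.mul_rpow hρ.le hb0.le, ht_split,
          hρ_split, Real.mul_rpow two_pos.le hb0.le, hcδ]
        field_simp
        ring
    _ ≤ t ^ ((n : ℝ) - 2) :=
        mul_le_of_le_one_right (by positivity) (inv_le_one_of_one_le₀ (Real.one_le_rpow hb hα0))

end IsRHPotential

lemma IsSchrodingerPotential.exists_critRho_lower_bound {n : ℕ} {q : ℝ} {V : Euc n → ℝ}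
    (hV : IsSchrodingerPotential n q V) (hn : 2 ≤ n) (hnq : (n : ℝ) < 2 * q) :
    (∀ x, 0 < critRho V x) ∧ ∃ c β : ℝ, 0 < c ∧ 0 < β ∧
      ∀ x y, c * critRho V y * (1 + dist x y / critRho V y) ^ (-β) ≤ critRho V x := by
  have hq : 1 < q := by
    have : (2 : ℝ) ≤ n := by exact_mod_cast hn
    linarith
  have hn0 : 0 < n := by omega
  obtain ⟨C, hC, hRH⟩ := hV.exists_isRHPotential
  obtain ⟨lam, hlam, hdbl⟩ := hRH.exists_doubling hn0 hq
  have hm : 0 < Real.logb lam 2 := Real.logb_pos hlam one_lt_two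
  have hρ := hRH.critRho_pos hn0 hq hnq hV.nontrivial
  refine ⟨hρ, (4 * 2 ^ Real.logb lam 2 * C) ^ (-(2 - n / q)⁻¹), Real.logb lam 2 / (2 - n / q),
    by positivity, div_pos hm (two_sub_div_pos hq hnq), fun x y => ?_⟩
  exact hRH.le_critRho hn0 hq hnq hV.nontrivial <|
    hRH.mem_critSet_of_growth hC hn0 hq hnq (hρ y) (K := 4) (by norm_num) hm.le
      (fun S hS => hRH.setIntegral_ball_le_of_critRho_le hn hq hnq hV.nontrivial hlam hdbl y hS) x

namespace Cube

variable {n : ℕ}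

lemma center_mem_set {Q : Cube n} (hQ : 0 ≤ Q.side) : Q.center ∈ Q.set := fun i => by
  simpa using div_nonneg hQ zero_le_two

lemma center_add_smul_single_mem_set (Q : Cube n) {t : ℝ} (ht : |t| ≤ Q.side / 2) (i : Fin n) :
    Q.center + t • EuclideanSpace.single i 1 ∈ Q.set := by
  intro j
  by_cases hj : j = i
  · simpa [hj] using ht
  · simpa [hj] using (abs_nonneg t).trans ht

lemma side_le_of_set_subset (hn : 0 < n) {P Q : Cube n} (hP : 0 ≤ P.side)
    (hPQ : P.set ⊆ Q.set) : P.side ≤ Q.side := by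
  let i : Fin n := ⟨0, hn⟩
  have hplus := hPQ (P.center_add_smul_single_mem_set (t := P.side / 2)
    (by rw [abs_of_nonneg (by positivity)]) i) i
  have hminus := hPQ (P.center_add_smul_single_mem_set (t := -(P.side / 2))
    (by rw [abs_neg, abs_of_nonneg (by positivity)]) i) i
  simp only [PiLp.add_apply, PiLp.smul_apply, PiLp.single_apply, ↓reduceIte, smul_eq_mul,
    mul_one] at hplus hminus
  rw [abs_le] at hplus hminus
  linarith [hplus.1, hplus.2, hminus.1, hminus.2]

lemma dist_center_le_of_mem_set {Q : Cube n} (hQ : 0 ≤ Q.side) {z : Euc n} (hz : z ∈ Q.set) :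
    dist z Q.center ≤ n * Q.side := by
  rw [EuclideanSpace.dist_eq]
  refine Real.sqrt_le_iff.2 ⟨by positivity, ?_⟩
  calc ∑ i, dist (z i) (Q.center i) ^ 2 ≤ ∑ _i : Fin n, (Q.side / 2) ^ 2 := by
        gcongr with i
        rw [Real.dist_eq]
        exact hz i
    _ ≤ (n * Q.side) ^ 2 := by
        simp only [Finset.sum_const, Finset.card_univ, Fintype.card_fin, nsmul_eq_mul]
        have : (n : ℝ) ≤ n ^ 2 := by exact_mod_cast Nat.le_self_pow two_ne_zero n
        nlinarith

lemma side_div_le_of_set_subset (hn : 0 < n) {ρ : Euc n → ℝ} (hρ : ∀ x, 0 < ρ x)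
    {c β : ℝ} (hc : 0 < c) (hβ : 0 ≤ β)
    (hlow : ∀ x y, c * ρ y * (1 + dist x y / ρ y) ^ (-β) ≤ ρ x) {P Q : Cube n}
    (hP : 0 < P.side) (hPQ : P.set ⊆ Q.set) :
    P.side / ρ P.center ≤ n ^ β / c * (1 + Q.side / ρ Q.center) ^ (1 + β) := by
  have hrR := side_le_of_set_subset hn hP.le hPQ
  have hQ : 0 ≤ Q.side := hP.le.trans hrR
  have hd := dist_center_le_of_mem_set hQ (hPQ (P.center_mem_set hP.le))
  set ρy := ρ Q.center
  have hρy : 0 < ρy := hρ _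
  set b := 1 + dist P.center Q.center / ρy
  set B := 1 + Q.side / ρy
  have hb : 0 < b := by positivity
  have hB : 1 ≤ B := le_add_of_nonneg_right (by positivity)
  have hbB : b ≤ n * B := by
    have hn1 : (1 : ℝ) ≤ n := by exact_mod_cast hn
    calc b ≤ 1 + n * Q.side / ρy := by unfold b; gcongr
      _ ≤ n * B := by
          rw [mul_add, mul_one, mul_div_assoc]
          linarith
  calc P.side / ρ P.center ≤ Q.side / (c * ρy * b ^ (-β)) :=
        div_le_div₀ hQ hrR (by positivity) (hlow _ _)
    _ = c⁻¹ * b ^ β * (Q.side / ρy) := by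
        rw [Real.rpow_neg hb.le]; field_simp
    _ ≤ c⁻¹ * (n ^ β * B ^ β) * B := by
        gcongr
        · rw [← Real.mul_rpow n.cast_nonneg (by positivity)]
          gcongr
        · exact le_add_of_nonneg_left zero_le_one
    _ = n ^ β / c * B ^ (1 + β) := by
        rw [Real.rpow_add (by positivity), Real.rpow_one]; ring

end Cube

lemma Psi_le_of_div_le {n : ℕ} {ρ : Euc n → ℝ} {P Q : Cube n} {K e θ : ℝ}
    (hP : 0 ≤ P.side / ρ P.center) (hQ : 0 ≤ Q.side / ρ Q.center) (hK : 0 ≤ K) (he : 0 ≤ e)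
    (hθ : 0 ≤ θ) (h : P.side / ρ P.center ≤ K * (1 + Q.side / ρ Q.center) ^ e) :
    Psi ρ θ P ≤ (1 + K) ^ θ * Psi ρ (θ * e) Q := by
  have hB : 1 ≤ 1 + Q.side / ρ Q.center := le_add_of_nonneg_right hQ
  have hBe : 1 ≤ (1 + Q.side / ρ Q.center) ^ e := Real.one_le_rpow hB he
  unfold Psi
  rw [mul_comm θ e, Real.rpow_mul (by positivity), ← Real.mul_rpow (by positivity) (by positivity)]
  gcongr
  nlinarith

/-- If `P ⊆ Q` are cubes then `r_P/ρ(x_P) ≤ C(1 + r_Q/ρ(x_Q))^{1+l₀}`,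
and consequently `Ψ_θ(P) ≤ C^θ Ψ_{θ(1+l₀)}(Q)` for every `θ ≥ 0`. -/
theorem statement9 {n : ℕ} (hn : 3 ≤ n) (q : ℝ) (hq : (n : ℝ) < q)
    (V : Euc n → ℝ) (hV : IsSchrodingerPotential n q V) :
    ∃ C l₀ : ℝ, 0 < C ∧ 0 < l₀ ∧
      ∀ P Q : Cube n, 0 < P.side → 0 < Q.side → P.set ⊆ Q.set →
        P.side / critRho V P.center ≤
          C * (1 + Q.side / critRho V Q.center) ^ (1 + l₀) ∧
        ∀ θ : ℝ, 0 ≤ θ →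
          Psi (critRho V) θ P ≤ C ^ θ * Psi (critRho V) (θ * (1 + l₀)) Q := by
  have hnq : (n : ℝ) < 2 * q := by
    have : (3 : ℝ) ≤ n := by exact_mod_cast hn
    linarith
  obtain ⟨hρ, c, β, hc, hβ, hlow⟩ := hV.exists_critRho_lower_bound (by omega) hnq
  refine ⟨1 + n ^ β / c, β, by positivity, hβ, fun P Q hP hQ hPQ => ?_⟩
  have hside := Cube.side_div_le_of_set_subset (by omega) hρ hc hβ.le hlow hP hPQ
  have hρP := hρ P.center
  have hρQ := hρ Q.center
  refine ⟨hside.trans (by gcongr; linarith), fun θ hθ => ?_⟩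
  exact Psi_le_of_div_le (by positivity) (by positivity) (by positivity) (by positivity) hθ hside
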